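/- arXiv:math/0210196 — 6 statements merged into one kernel-verified Lean document; each statement's English description precedes it below -/
import Mathlib

section
/- Let W be a finite set with |W| = 2g+2 where g is odd. The map Q_+ : P2^+(W) → Z/2Z defined on classes of even-cardinality subsets by Q_+(Ā) = (|A|/2) mod 2 is well defined and satisfies, for all even subsets A, B: Q_+(Ā + B̄) = Q_+(Ā) + Q_+(B̄) + e(Ā, B̄), where e(Ā,B̄) = |A∩B| mod 2. That is, Q_+ is a quadratic form whose polarization is the symplectic form e. -/
open Finset
open scoped symmDiff

/-- The setoid on subsets of `W` identifying a subset with its complement. -/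
def P2setoid (W : Type*) [DecidableEq W] [Fintype W] : Setoid (Finset W) where
  r A B := B = A ∨ B = Aᶜ
  iseqv := by
    refine ⟨fun A => Or.inl rfl, ?_, ?_⟩
    · intro A B h
      rcases h with rfl | rfl
      · exact Or.inl rfl
      · exact Or.inr (by simp)
    · intro A B C h1 h2
      rcases h1 with rfl | rfl <;> rcases h2 with rfl | rfl <;> simp

private lemma zmod2_cast_eq (m n : ℕ) (h : m % 2 = n % 2) : (m : ZMod 2) = n := by
  rw [ZMod.natCast_eq_natCast_iff]
  exact h

private lemma symmDiff_card {W : Type*} [DecidableEq W] (A B : Finset W) :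
    (A ∆ B).card + 2 * (A ∩ B).card = A.card + B.card := by
  have h1 : (A \ B).card + (A ∩ B).card = A.card := Finset.card_sdiff_add_card_inter A B
  have h2 : (B \ A).card + (B ∩ A).card = B.card := Finset.card_sdiff_add_card_inter B A
  have hd : Disjoint (A \ B) (B \ A) := disjoint_sdiff_sdiff
  have h3 : (A ∆ B).card = (A \ B).card + (B \ A).card := by
    rw [symmDiff_def, Finset.sup_eq_union, Finset.card_union_of_disjoint hd]
  rw [Finset.inter_comm B A] at h2
  omega

/-- For `|W| = 2g+2` with `g` odd, the map `Q₊(Ā) = (|A|/2) mod 2` is well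
defined on classes of even subsets modulo complementation and is a quadratic form whose
polarization is the symplectic form `e(Ā,B̄) = |A ∩ B| mod 2`. -/
theorem stmt_3 {W : Type*} [DecidableEq W] [Fintype W] (g : ℕ) (hg : Odd g)
    (hW : Fintype.card W = 2 * g + 2) :
    ∃ Qp : Quotient (P2setoid W) → ZMod 2,
      (∀ A : Finset W, Even A.card →
        Qp (Quotient.mk (P2setoid W) A) = ((A.card / 2 : ℕ) : ZMod 2)) ∧
      (∀ A B : Finset W, Even A.card → Even B.card →
        Qp (Quotient.mk (P2setoid W) (A ∆ B)) =
          Qp (Quotient.mk (P2setoid W) A) + Qp (Quotient.mk (P2setoid W) B) +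
            ((A ∩ B).card : ZMod 2)) := by
  obtain ⟨k, hk⟩ := hg
  set f : Finset W → ZMod 2 := fun A =>
    if Even A.card then ((A.card / 2 : ℕ) : ZMod 2) else 0 with hf
  have hcompl : ∀ A : Finset W, (Aᶜ : Finset W).card = 2 * g + 2 - A.card := by
    intro A
    rw [Finset.card_compl, hW]
  have hle : ∀ A : Finset W, A.card ≤ 2 * g + 2 := by
    intro A
    have := Finset.card_le_univ A
    omega
  have hwell : ∀ A B : Finset W, (P2setoid W).r A B → f A = f B := by
    intro A B h
    rcases h with rfl | rfl
    · rfl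
    · have hc := hcompl A
      have hl := hle A
      simp only [hf]
      by_cases hA : Even A.card
      · have hAc : Even (Aᶜ : Finset W).card := by
          rw [hc, Nat.even_sub hl]
          simp [hA, Nat.even_add]
        rw [if_pos hA, if_pos hAc]
        apply zmod2_cast_eq
        rw [Nat.even_iff] at hA
        omega
      · have hAc : ¬ Even (Aᶜ : Finset W).card := by
          rw [hc, Nat.even_sub hl]
          simp [hA, Nat.even_add]
        rw [if_neg hA, if_neg hAc]
  refine ⟨Quotient.lift f hwell, ?_, ?_⟩
  · intro A hA
    show f A = _
    simp [hf, hA]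
  · intro A B hA hB
    have hAB : Even (A ∆ B).card := by
      have := symmDiff_card A B
      rw [Nat.even_iff] at hA hB ⊢
      omega
    show f (A ∆ B) = f A + f B + _
    simp only [hf, if_pos hA, if_pos hB, if_pos hAB]
    have key := symmDiff_card A B
    rw [Nat.even_iff] at hA hB
    have : ((A ∆ B).card / 2 : ℕ) % 2 =
        (A.card / 2 + B.card / 2 + (A ∩ B).card) % 2 := by omega
    calc ((A ∆ B).card / 2 : ℕ) = ((A.card / 2 + B.card / 2 + (A ∩ B).card : ℕ) : ZMod 2) :=
          zmod2_cast_eq _ _ this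
      _ = _ := by push_cast; ring
end

section
/- Let W be a finite set with |W| = 2g+2 where g is even. Let P2^-(W) be the set of odd-cardinality subsets of W modulo complementation, and define Q_-(Ā) = ((|A|+1)/2) mod 2. Then Q_- is well defined, P2^-(W) is a torsor under the group P2^+(W) (acting by symmetric difference), and for all s ∈ P2^-(W) and j1, j2 ∈ P2^+(W): Q_-(s) + Q_-(j1+s) + Q_-(j2+s) + Q_-(j1+j2+s) = e(j1, j2). -/
open Finset
open scoped symmDiff

/-!
Even sets `C` act on odd sets by `A ↦ C ∆ A`, and `#(C ∆ A) + 2 #(C ∩ A) = #C + #A` gives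
`Q₋(C ∆ A) = Q₋(A) + #C/2 + #(C ∩ A)` mod 2. Summing this over `C ∈ {∅, C₁, C₂, C₁ ∆ C₂}`, the
terms `#C/2` add up to `#(C₁ ∩ C₂)` and the terms `#(C ∩ A)` cancel in pairs. Well-definedness
uses `#Aᶜ = 2g + 2 - #A` with `g` even.
-/

namespace Finset

variable {W : Type*} [DecidableEq W]

theorem card_symmDiff_add_two_mul_card_inter (s t : Finset W) :
    #(s ∆ t) + 2 * #(s ∩ t) = #s + #t := by
  rw [Finset.symmDiff_def, card_union_of_disjoint disjoint_sdiff_sdiff, two_mul,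
    add_add_add_comm, card_sdiff_add_card_inter, inter_comm, card_sdiff_add_card_inter]

theorem even_card_symmDiff_iff (s t : Finset W) :
    Even #(s ∆ t) ↔ (Even #s ↔ Even #t) := by
  have h := congrArg Even (card_symmDiff_add_two_mul_card_inter s t)
  simpa [Nat.even_add] using h

theorem natCast_card_symmDiff_zmod_two (s t : Finset W) :
    (#(s ∆ t) : ZMod 2) = #s + #t := by
  have h := card_symmDiff_add_two_mul_card_inter s t
  rw [← Nat.cast_add, ZMod.natCast_eq_natCast_iff']
  omega

theorem natCast_card_symmDiff_div_two {s t : Finset W} (hs : Even #s) (ht : Even #t) :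
    ((#(s ∆ t) / 2 : ℕ) : ZMod 2) = (#s / 2 : ℕ) + (#t / 2 : ℕ) + #(s ∩ t) := by
  have h := card_symmDiff_add_two_mul_card_inter s t
  rw [Nat.even_iff] at hs ht
  rw [← Nat.cast_add, ← Nat.cast_add, ZMod.natCast_eq_natCast_iff']
  omega

theorem inter_symmDiff_distrib_right (s t u : Finset W) : s ∆ t ∩ u = (s ∩ u) ∆ (t ∩ u) :=
  inf_symmDiff_distrib_right s t u

end Finset

theorem compl_symmDiff_eq_compl_symmDiff {α : Type*} [BooleanAlgebra α] (a b : α) :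
    (a ∆ b)ᶜ = aᶜ ∆ b := by
  rw [← hnot_eq_compl, ← hnot_eq_compl, ← top_symmDiff, ← top_symmDiff, symmDiff_assoc]

section QMinus

variable {W : Type*}

/-- `Q₋(A) = ((#A + 1) / 2) mod 2` on odd sets; the value `0` on even sets is a junk value, since
no choice there is compatible with complementation. -/
def qMinus (A : Finset W) : ZMod 2 :=
  if Even #A then 0 else ((#A + 1) / 2 : ℕ)

theorem qMinus_of_not_even {A : Finset W} (hA : ¬Even #A) :
    qMinus A = ((#A + 1) / 2 : ℕ) :=
  if_neg hA

theorem qMinus_compl [DecidableEq W] [Fintype W] {g : ℕ} (hg : Even g)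
    (hW : Fintype.card W = 2 * g + 2) (A : Finset W) : qMinus Aᶜ = qMinus A := by
  have hcompl : #Aᶜ + #A = 2 * g + 2 := by
    rw [card_compl, ← hW, Nat.sub_add_cancel A.card_le_univ]
  rw [Nat.even_iff] at hg
  by_cases hA : Even #A
  · have hAc : Even #Aᶜ := by rw [Nat.even_iff] at hA ⊢; omega
    rw [qMinus, qMinus, if_pos hA, if_pos hAc]
  · have hAc : ¬Even #Aᶜ := by rw [Nat.not_even_iff] at hA ⊢; omega
    rw [qMinus_of_not_even hA, qMinus_of_not_even hAc, ZMod.natCast_eq_natCast_iff']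
    rw [Nat.not_even_iff] at hA
    omega

theorem qMinus_symmDiff [DecidableEq W] {A C : Finset W} (hA : ¬Even #A) (hC : Even #C) :
    qMinus (C ∆ A) = qMinus A + (#C / 2 : ℕ) + #(C ∩ A) := by
  have hCA : ¬Even #(C ∆ A) := by rw [even_card_symmDiff_iff]; tauto
  have h := card_symmDiff_add_two_mul_card_inter C A
  rw [qMinus_of_not_even hCA, qMinus_of_not_even hA, ← Nat.cast_add, ← Nat.cast_add,
    ZMod.natCast_eq_natCast_iff']
  rw [Nat.not_even_iff] at hA
  rw [Nat.even_iff] at hC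
  omega

theorem qMinus_add_qMinus_add_qMinus_add_qMinus [DecidableEq W] {A C₁ C₂ : Finset W}
    (hA : ¬Even #A) (hC₁ : Even #C₁) (hC₂ : Even #C₂) :
    qMinus A + qMinus (C₁ ∆ A) + qMinus (C₂ ∆ A) + qMinus (C₁ ∆ (C₂ ∆ A)) = #(C₁ ∩ C₂) := by
  have hC₁₂ : Even #(C₁ ∆ C₂) := by rw [even_card_symmDiff_iff]; tauto
  rw [← symmDiff_assoc, qMinus_symmDiff hA hC₁, qMinus_symmDiff hA hC₂,
    qMinus_symmDiff hA hC₁₂, natCast_card_symmDiff_div_two hC₁ hC₂,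
    inter_symmDiff_distrib_right, natCast_card_symmDiff_zmod_two]
  ring_nf
  reduce_mod_char

end QMinus

/-- For `|W| = 2g+2` with `g` even, the map `Q₋(Ā) = ((|A|+1)/2) mod 2` is
well defined on classes of odd subsets modulo complementation, `P2⁻(W)` is a torsor under
`P2⁺(W)` acting by symmetric difference, and the four-term symplectic-torsor identity
holds with respect to `e(Ā,B̄) = |A ∩ B| mod 2`. -/
theorem stmt_4 {W : Type*} [DecidableEq W] [Fintype W] (g : ℕ) (hg : Even g)
    (hW : Fintype.card W = 2 * g + 2) :
    ∃ Qm : Quotient (P2setoid W) → ZMod 2,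
      (∀ A : Finset W, ¬ Even A.card →
        Qm (Quotient.mk (P2setoid W) A) = (((A.card + 1) / 2 : ℕ) : ZMod 2)) ∧
      (∀ A B : Finset W, ¬ Even A.card → ¬ Even B.card →
        ∃ C : Finset W, Even C.card ∧
          Quotient.mk (P2setoid W) (C ∆ A) = Quotient.mk (P2setoid W) B) ∧
      (∀ A C C' : Finset W, ¬ Even A.card → Even C.card → Even C'.card →
        Quotient.mk (P2setoid W) (C ∆ A) = Quotient.mk (P2setoid W) (C' ∆ A) →
        Quotient.mk (P2setoid W) C = Quotient.mk (P2setoid W) C') ∧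
      (∀ A C₁ C₂ : Finset W, ¬ Even A.card → Even C₁.card → Even C₂.card →
        Qm (Quotient.mk (P2setoid W) A) + Qm (Quotient.mk (P2setoid W) (C₁ ∆ A)) +
          Qm (Quotient.mk (P2setoid W) (C₂ ∆ A)) +
          Qm (Quotient.mk (P2setoid W) (C₁ ∆ (C₂ ∆ A))) =
        ((C₁ ∩ C₂).card : ZMod 2)) := by
  refine ⟨Quotient.lift qMinus fun A B hAB => ?_, fun A hA => qMinus_of_not_even hA,
    fun A B hA hB => ⟨B ∆ A, ?_, by rw [symmDiff_symmDiff_cancel_right]⟩,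
    fun A C C' _ _ _ hCC' => ?_,
    fun A C₁ C₂ hA hC₁ hC₂ => qMinus_add_qMinus_add_qMinus_add_qMinus hA hC₁ hC₂⟩
  · rcases hAB with rfl | rfl
    exacts [rfl, (qMinus_compl hg hW A).symm]
  · rw [even_card_symmDiff_iff]
    tauto
  · apply Quotient.sound
    rcases Quotient.exact hCC' with h | h
    · exact Or.inl (symmDiff_left_injective A h)
    · rw [compl_symmDiff_eq_compl_symmDiff] at h
      exact Or.inr (symmDiff_left_injective A h)
end

section
/- Let (J, ·) be a finite symplectic F_2-vector space with set of quadratic refinements Quad(J), acted on simply transitively by J. Then (Quad(J), Arf) is a symplectic torsor over (J, ·): for all q ∈ Quad(J) and j1, j2 ∈ J, Arf(q) + Arf(j1+q) + Arf(j2+q) + Arf(j1+j2+q) = j1·j2. -/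
/-- `B` is a symplectic form on the `𝔽₂`-vector space `J`: bilinear, alternating and
non-degenerate. -/
def IsSymplectic {J : Type*} [AddCommGroup J] [Module (ZMod 2) J]
    (B : J → J → ZMod 2) : Prop :=
  (∀ x y z, B (x + y) z = B x z + B y z) ∧
  (∀ x y z, B x (y + z) = B x y + B x z) ∧
  (∀ x, B x x = 0) ∧
  (∀ x, (∀ y, B x y = 0) → x = 0)

/-- The set of quadratic refinements of the form `B`. -/
def QuadSet {J : Type*} [AddCommGroup J] (B : J → J → ZMod 2) : Set (J → ZMod 2) :=
  {q | ∀ x y, q x + q y + q (x + y) = B x y}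

/-- The Arf invariant of `q : J → ℤ/2`: it is `0` iff `q` takes the value `0` on more than
half of the elements of `J`. -/
noncomputable def ArfInv {J : Type*} [Finite J] (q : J → ZMod 2) : ZMod 2 :=
  if Nat.card J < 2 * Nat.card {x : J // q x = 0} then 0 else 1

/-! ### Auxiliary material: Gauss sums -/

/-- The character `(-1)^c` on `ℤ/2`. -/
private def chi (c : ZMod 2) : ℤ := if c = 0 then 1 else -1

private lemma chi_add : ∀ a b : ZMod 2, chi (a + b) = chi a * chi b := by decide

private lemma chi_zero : chi 0 = 1 := by decide

/-- Counting formula for the Gauss sum. -/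
private lemma wsum_eq {J : Type*} [Fintype J] (q : J → ZMod 2) :
    ∑ x, chi (q x) = 2 * (Nat.card {x : J // q x = 0} : ℤ) - Nat.card J := by
  classical
  have h1 : ∀ x : J, chi (q x) = 2 * (if q x = 0 then (1 : ℤ) else 0) - 1 := by
    intro x; unfold chi; split <;> ring
  simp_rw [h1]
  rw [Finset.sum_sub_distrib, ← Finset.mul_sum, Finset.sum_boole, Finset.sum_const,
    nsmul_eq_mul, mul_one, Nat.card_eq_fintype_card, Nat.card_eq_fintype_card,
    Fintype.card_subtype, Finset.card_univ]

/-- A nontrivial additive character sums to zero. -/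
private lemma sum_chi_lin {J : Type*} [AddCommGroup J] [Fintype J] (L : J → ZMod 2)
    (hL : ∀ x y, L (x + y) = L x + L y) (x₀ : J) (h0 : L x₀ ≠ 0) :
    ∑ x, chi (L x) = 0 := by
  have h1 : chi (L x₀) = -1 := by unfold chi; simp [h0]
  have h2 : ∑ x, chi (L x) = ∑ x, chi (L (x + x₀)) :=
    (Equiv.sum_comp (Equiv.addRight x₀) (fun x => chi (L x))).symm
  have h3 : ∀ x : J, chi (L (x + x₀)) = -chi (L x) := by
    intro x; rw [hL, chi_add, h1]; ring
  simp_rw [h3, Finset.sum_neg_distrib] at h2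
  linarith

private lemma zhelp1 : ∀ a b c d : ZMod 2, a + b + c = d → a + c = b + d := by decide

private lemma zhelp2 : ∀ a b : ZMod 2, a + b = 0 → a = b := by decide

private lemma zhelp3 : ∀ a : ZMod 2, a = a + a → a = 0 := by decide

private lemma zhelp4 : ∀ a : ZMod 2, a + a + a = 0 → a = 0 := by decide

private lemma zhelp5 : ∀ A a b c d : ZMod 2, a + b + c = d →
    A + (A + a) + (A + b) + (A + c) = d := by decide

private lemma zhelp6 : ∀ a b c d : ZMod 2, a + b + c = d → a + d = b + c := by decide

private lemma ztwo : ∀ c : ZMod 2, c = 0 ∨ c = 1 := by decide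

section Main

variable {J : Type*} [AddCommGroup J] [Module (ZMod 2) J] [Fintype J]
  (B : J → J → ZMod 2)

private lemma Bsymm (hB : IsSymplectic B) (x y : J) : B x y = B y x := by
  obtain ⟨hl, hr, halt, -⟩ := hB
  apply zhelp2
  have h := halt (x + y)
  rw [hl, hr, hr, halt, halt, zero_add, add_zero] at h
  exact h

private lemma Bzero (hB : IsSymplectic B) (x : J) : B x 0 = 0 := by
  obtain ⟨-, hr, -, -⟩ := hB
  apply zhelp3
  have h := hr x 0 0
  rwa [add_zero] at h

private lemma qzero (hB : IsSymplectic B) (q : J → ZMod 2) (hq : q ∈ QuadSet B) : q 0 = 0 := by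
  apply zhelp4
  have h := hq 0 0
  rwa [add_zero, Bzero B hB] at h

/-- The Gauss sum squares to the cardinality of `J`. -/
private lemma wsum_sq (hB : IsSymplectic B) (q : J → ZMod 2) (hq : q ∈ QuadSet B) :
    (∑ x, chi (q x)) * (∑ x, chi (q x)) = Fintype.card J := by
  classical
  obtain ⟨hl, hr, halt, hnd⟩ := hB
  rw [Finset.sum_mul_sum]
  have step1 : ∀ x : J, ∑ y, chi (q x) * chi (q y) = ∑ z, chi (q z) * chi (B x z) := by
    intro x
    have e : ∑ y, chi (q x) * chi (q y) = ∑ z, chi (q x) * chi (q (x + z)) :=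
      (Equiv.sum_comp (Equiv.addLeft x) (fun y => chi (q x) * chi (q y))).symm
    rw [e]
    refine Finset.sum_congr rfl fun z _ => ?_
    rw [← chi_add, ← chi_add]
    congr 1
    exact zhelp1 _ _ _ _ (hq x z)
  simp_rw [step1]
  rw [Finset.sum_comm]
  have step2 : ∀ z : J, z ≠ 0 → ∑ x, chi (q z) * chi (B x z) = 0 := by
    intro z hz
    rw [← Finset.mul_sum]
    have hex : ∃ x₀, B x₀ z ≠ 0 := by
      by_contra hc
      push_neg at hc
      exact hz (hnd z fun y => (Bsymm B ⟨hl, hr, halt, hnd⟩ z y).symm ▸ hc y)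
    obtain ⟨x₀, hx₀⟩ := hex
    rw [sum_chi_lin (fun x => B x z) (fun x y => hl x y z) x₀ hx₀, mul_zero]
  rw [Finset.sum_eq_single 0 (fun z _ hz => step2 z hz) (by simp)]
  have hB0 : ∀ x : J, B x 0 = 0 := Bzero B ⟨hl, hr, halt, hnd⟩
  have hq0 : q 0 = 0 := qzero B ⟨hl, hr, halt, hnd⟩ q hq
  simp [hB0, hq0, chi_zero]

/-- Translation of the Gauss sum by an element of `J`. -/
private lemma wsum_shift (hB : IsSymplectic B) (q : J → ZMod 2) (hq : q ∈ QuadSet B) (j : J) :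
    ∑ x, chi (q x + B j x) = chi (q j) * ∑ x, chi (q x) := by
  have key : ∀ x : J, chi (q x + B j x) = chi (q j) * chi (q (x + j)) := by
    intro x
    rw [← chi_add]
    congr 1
    have h := hq x j
    rw [Bsymm B hB j x]
    exact zhelp6 _ _ _ _ h
  simp_rw [key, ← Finset.mul_sum]
  congr 1
  exact Equiv.sum_comp (Equiv.addRight j) (fun x => chi (q x))

/-- If the Gauss sums differ by a sign `chi c`, the Arf invariants differ by `c`. -/
private lemma arf_of_wsum (q q' : J → ZMod 2) (c : ZMod 2)
    (h : ∑ x, chi (q' x) = chi c * ∑ x, chi (q x)) (h0 : (∑ x, chi (q x)) ≠ 0) :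
    ArfInv q' = ArfInv q + c := by
  classical
  have e1 := wsum_eq q
  have e2 := wsum_eq q'
  have hc : c = 0 ∨ c = 1 := ztwo c
  unfold ArfInv
  rcases hc with rfl | rfl
  · rw [chi_zero, one_mul] at h
    rw [e1, e2] at h
    have hcard : Nat.card J = Fintype.card J := Nat.card_eq_fintype_card
    have : (Nat.card J < 2 * Nat.card {x : J // q' x = 0}) ↔
        (Nat.card J < 2 * Nat.card {x : J // q x = 0}) := by omega
    simp only [this, add_zero]
  · have hneg : chi 1 = -1 := by decide
    rw [hneg] at h
    rw [e1, e2] at h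
    rw [e1] at h0
    have hiff : (Nat.card J < 2 * Nat.card {x : J // q' x = 0}) ↔
        ¬(Nat.card J < 2 * Nat.card {x : J // q x = 0}) := by omega
    split_ifs with h1 h2 h2
    · exact absurd h2 (hiff.mp h1)
    · decide
    · decide
    · exact absurd (hiff.mpr h2) h1

end Main

/-- `(Quad(J), Arf)` is a symplectic torsor over `(J, B)`: for every
quadratic refinement `q` and all `j₁, j₂ ∈ J`,
`Arf(q) + Arf(j₁+q) + Arf(j₂+q) + Arf(j₁+j₂+q) = B j₁ j₂`. -/
theorem stmt_7 {J : Type*} [AddCommGroup J] [Module (ZMod 2) J] [Finite J]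
    (B : J → J → ZMod 2) (hB : IsSymplectic B)
    (q : J → ZMod 2) (hq : q ∈ QuadSet B) (j₁ j₂ : J) :
    ArfInv q + ArfInv (fun x => q x + B j₁ x) + ArfInv (fun x => q x + B j₂ x) +
      ArfInv (fun x => q x + B (j₁ + j₂) x) = B j₁ j₂ := by
  classical
  cases nonempty_fintype J
  have hW0 : (∑ x, chi (q x)) ≠ 0 := by
    intro h
    have hsq := wsum_sq B hB q hq
    rw [h, mul_zero] at hsq
    have : 0 < Fintype.card J := Fintype.card_pos_iff.mpr ⟨0⟩
    omega
  have a1 := arf_of_wsum q (fun x => q x + B j₁ x) (q j₁)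
    (wsum_shift B hB q hq j₁) hW0
  have a2 := arf_of_wsum q (fun x => q x + B j₂ x) (q j₂)
    (wsum_shift B hB q hq j₂) hW0
  have a3 := arf_of_wsum q (fun x => q x + B (j₁ + j₂) x) (q (j₁ + j₂))
    (wsum_shift B hB q hq (j₁ + j₂)) hW0
  rw [a1, a2, a3]
  exact zhelp5 _ _ _ _ _ (hq j₁ j₂)
end

section
/- Let J be a 12-dimensional symplectic F_2-vector space. Consider sets {q, q+a_1, q+a_2, q+a_3} of four distinct quadratic refinements, all with Arf invariant 0, where a_1, a_2, a_3 ∈ J are nonzero and distinct. Suppose {q, q+a_1, q+a_2, q+a_3} and {q', q'+a_1', q'+a_2', q'+a_3'} are two such sets with dim span(a_1,a_2,a_3) = dim span(a_1',a_2',a_3'), and there is a permutation σ ∈ S_3 with a_k·a_l = a'_{σ(k)}·a'_{σ(l)} for all k,l. Then there is a symplectic automorphism of J mapping the first set of quadratic forms to the second (i.e. an M ∈ Sp(J) acting on Quad(J) by q ↦ q∘M^{-1} carrying one 4-element set onto the other). -/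
/-!
Write `b k = a' (σ k)`. Since the Gram matrices of `a` and `b` agree, Witt's extension theorem
gives an isometry `g` with `g (a k) = b k`: over `𝔽₂` three distinct nonzero vectors are either
independent or satisfy `a 2 = a 0 + a 1`, and the span dimensions say which. Witt's theorem
itself follows by moving one vector at a time with transvections `x ↦ x + B v x • v`.

It remains to compare the refinements `r = q ∘ g⁻¹` and `q'`. They differ by a linear form,
`r = q' + B c`. An even refinement `p` with `p + B c` even has `p c = 0`, since otherwise
translation by `c` would carry the zeros of `p + B c` onto the ones of `p`. Applied to `q'`, to
`r` and to the `b k`, this gives `q' c = 0` and `B c (b k) = 0`, so the transvection along `c`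
fixes the `b k` and carries `q'` to `r`.
-/

lemma ZMod.eq_zero_or_eq_one (c : ZMod 2) : c = 0 ∨ c = 1 := by
  decide +revert

namespace ZModModule

variable {V : Type*} [AddCommGroup V] [Module (ZMod 2) V]

lemma linearIndependent_pair_of_ne {x y : V} (hx : x ≠ 0) (hy : y ≠ 0) (hxy : x ≠ y) :
    LinearIndependent (ZMod 2) ![x, y] := by
  rw [LinearIndependent.pair_iff]
  intro s t hst
  rcases s.eq_zero_or_eq_one with rfl | rfl <;> rcases t.eq_zero_or_eq_one with rfl | rfl <;>
    simp_all [add_eq_zero_iff_eq_neg, neg_eq_self]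

lemma eq_add_of_not_linearIndependent {a : Fin 3 → V} (ha0 : ∀ i, a i ≠ 0)
    (ha : Function.Injective a) (h : ¬ LinearIndependent (ZMod 2) a) : a 2 = a 0 + a 1 := by
  have ha' : a = Fin.cons (a 0) ![a 1, a 2] := by ext i; fin_cases i <;> rfl
  rw [ha', linearIndependent_finCons, Matrix.range_cons_cons_empty, not_and, not_not] at h
  obtain ⟨s, t, hst⟩ := Submodule.mem_span_pair.1
    (h (linearIndependent_pair_of_ne (ha0 1) (ha0 2) (ha.ne (by decide))))
  rcases s.eq_zero_or_eq_one with rfl | rfl <;> rcases t.eq_zero_or_eq_one with rfl | rfl <;>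
    simp only [zero_smul, one_smul, zero_add, add_zero] at hst
  · exact absurd hst.symm (ha0 0)
  · exact absurd (ha hst) (by decide)
  · exact absurd (ha hst) (by decide)
  · rw [← hst, add_comm (a 1), add_assoc, add_self, add_zero]

end ZModModule

lemma Set.insert_comp_perm_fin_three {α : Type*} (x : α) (f : Fin 3 → α)
    (σ : Equiv.Perm (Fin 3)) :
    ({x, f (σ 0), f (σ 1), f (σ 2)} : Set α) = {x, f 0, f 1, f 2} := by
  have hrange (g : Fin 3 → α) : ({g 0, g 1, g 2} : Set α) = Set.range g := by
    ext; simp [Fin.exists_fin_succ, eq_comm]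
  have hσ := hrange (f ∘ σ)
  simp only [Function.comp_apply] at hσ
  rw [hσ, EquivLike.range_comp, hrange]

namespace IsSymplectic

variable {J : Type*} [AddCommGroup J] [Module (ZMod 2) J] {B : J → J → ZMod 2}

lemma map_add_left (hB : IsSymplectic B) (x y z : J) : B (x + y) z = B x z + B y z := hB.1 x y z

lemma map_add_right (hB : IsSymplectic B) (x y z : J) : B x (y + z) = B x y + B x z :=
  hB.2.1 x y z

lemma apply_self (hB : IsSymplectic B) (x : J) : B x x = 0 := hB.2.2.1 x

lemma map_zero_left (hB : IsSymplectic B) (y : J) : B 0 y = 0 := by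
  simpa using hB.map_add_left 0 0 y

lemma map_zero_right (hB : IsSymplectic B) (x : J) : B x 0 = 0 := by
  simpa using hB.map_add_right x 0 0

lemma comm (hB : IsSymplectic B) (x y : J) : B x y = B y x := by
  have h := hB.apply_self (x + y)
  rw [hB.map_add_left, hB.map_add_right, hB.map_add_right, hB.apply_self, hB.apply_self,
    zero_add, add_zero, add_eq_zero_iff_eq_neg, ZModModule.neg_eq_self] at h
  exact h

lemma map_smul_left (hB : IsSymplectic B) (c : ZMod 2) (x y : J) :
    B (c • x) y = c • B x y := by
  rcases c.eq_zero_or_eq_one with rfl | rfl <;> simp [hB.map_zero_left]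

lemma map_smul_right (hB : IsSymplectic B) (c : ZMod 2) (x y : J) :
    B x (c • y) = c • B x y := by
  rcases c.eq_zero_or_eq_one with rfl | rfl <;> simp [hB.map_zero_right]

lemma apply_add_smul_self (hB : IsSymplectic B) (v x : J) (c : ZMod 2) :
    B v (x + c • v) = B v x := by
  rw [hB.map_add_right, hB.map_smul_right, hB.apply_self, smul_zero, add_zero]

def toBilin (hB : IsSymplectic B) : LinearMap.BilinForm (ZMod 2) J :=
  LinearMap.mk₂ (ZMod 2) B hB.1 hB.map_smul_left hB.2.1 hB.map_smul_right

@[simp]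
lemma toBilin_apply (hB : IsSymplectic B) (x y : J) : hB.toBilin x y = B x y := rfl

lemma toBilin_nondegenerate (hB : IsSymplectic B) : hB.toBilin.Nondegenerate :=
  ⟨hB.2.2.2, fun y hy => hB.2.2.2 y fun x => (hB.comm y x).trans (hy x)⟩

lemma isometryEquiv_apply_apply (hB : IsSymplectic B) (g : hB.toBilin.IsometryEquiv hB.toBilin)
    (x y : J) : B (g x) (g y) = B x y :=
  g.map_app y x

lemma isometryEquiv_apply_eq_apply_symm (hB : IsSymplectic B)
    (g : hB.toBilin.IsometryEquiv hB.toBilin) (x y : J) : B (g x) y = B x (g.symm y) := by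
  have hy : g (g.symm y) = y := g.toLinearEquiv.apply_symm_apply y
  rw [← hB.isometryEquiv_apply_apply g x (g.symm y), hy]

lemma apply_eq_of_mem_span (hB : IsSymplectic B) {ι : Type*} {p : ι → J} {u v : J}
    (h : ∀ i, B (p i) v = B (p i) u) {z : J} (hz : z ∈ Submodule.span (ZMod 2) (Set.range p)) :
    B z v = B z u :=
  LinearMap.eqOn_span' (f := hB.toBilin.flip v) (g := hB.toBilin.flip u)
    (Set.forall_mem_range.2 h) hz

def transvection (hB : IsSymplectic B) (v : J) : hB.toBilin.IsometryEquiv hB.toBilin where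
  toFun x := x + B v x • v
  invFun x := x + B v x • v
  map_add' x y := by
    rw [hB.map_add_right, add_smul, add_add_add_comm]
  map_smul' c x := by
    rw [hB.map_smul_right, smul_add, smul_eq_mul, mul_smul, RingHom.id_apply]
  left_inv x := by
    simp only [hB.apply_add_smul_self, add_assoc, ZModModule.add_self, add_zero]
  right_inv x := by
    simp only [hB.apply_add_smul_self, add_assoc, ZModModule.add_self, add_zero]
  map_app' x y := by
    show B (x + B v x • v) (y + B v y • v) = B x y
    rw [hB.map_add_left, hB.map_smul_left, hB.apply_add_smul_self, hB.map_add_right,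
      hB.map_smul_right, hB.comm x v, smul_eq_mul, smul_eq_mul, mul_comm, add_assoc,
      ZModModule.add_self, add_zero]

lemma transvection_apply (hB : IsSymplectic B) (v x : J) :
    hB.transvection v x = x + B v x • v := rfl

lemma transvection_apply_of_apply_eq_zero (hB : IsSymplectic B) {v x : J} (h : B v x = 0) :
    hB.transvection v x = x := by
  rw [transvection_apply, h, zero_smul, add_zero]

lemma transvection_add_apply_left (hB : IsSymplectic B) {u w : J} (h : B u w = 1) :
    hB.transvection (u + w) u = w := by
  rw [transvection_apply, hB.map_add_left, hB.apply_self, hB.comm, h, zero_add, one_smul,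
    ← add_assoc, ZModModule.add_self, zero_add]

variable [Finite J]

lemma exists_eq_apply (hB : IsSymplectic B) (f : Module.Dual (ZMod 2) J) :
    ∃ v, ∀ y, B v y = f y :=
  ⟨(hB.toBilin.toDual hB.toBilin_nondegenerate).symm f, fun y => by
    rw [← hB.toBilin_apply, ← LinearMap.BilinForm.toDual_def hB.toBilin_nondegenerate,
      LinearEquiv.apply_symm_apply]⟩

lemma exists_forall_apply_eq (hB : IsSymplectic B) {ι : Type*} {x : ι → J}
    (hx : LinearIndependent (ZMod 2) x) (c : ι → ZMod 2) : ∃ v, ∀ i, B (x i) v = c i := by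
  obtain ⟨f, hf⟩ := LinearMap.exists_extend ((Module.Basis.span hx).constr (ZMod 2) c)
  obtain ⟨v, hv⟩ := hB.exists_eq_apply f
  refine ⟨v, fun i => ?_⟩
  have hfx := LinearMap.congr_fun hf (Module.Basis.span hx i)
  rw [LinearMap.comp_apply, Module.Basis.constr_basis, Submodule.subtype_apply,
    Module.Basis.span_apply] at hfx
  rw [hB.comm, hv, hfx]

/-- When `B u w = 0`, a vector through which two transvections move `u` to `w` fixing `p`. -/
lemma exists_intermediate (hB : IsSymplectic B) {k : ℕ} {p : Fin k → J} {u w : J}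
    (hu : LinearIndependent (ZMod 2) (Fin.cons u p : Fin (k + 1) → J))
    (hw : w ∉ Submodule.span (ZMod 2) (Set.range p)) (huw : B u w = 0) :
    ∃ v, B u v = 1 ∧ B w v = 1 ∧ ∀ i, B (p i) v = B (p i) u := by
  by_cases hwu : w ∈ Submodule.span (ZMod 2) (Set.range (Fin.cons u p : Fin (k + 1) → J))
  · rw [Fin.range_cons, Submodule.mem_span_insert] at hwu
    obtain ⟨c, z, hz, rfl⟩ := hwu
    obtain rfl : c = 1 := c.eq_zero_or_eq_one.resolve_left <| by
      rintro rfl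
      exact hw (by rwa [zero_smul, zero_add])
    obtain ⟨v, hv⟩ := hB.exists_forall_apply_eq hu (Fin.cons 1 fun i => B (p i) u)
    have hpv (i : Fin k) : B (p i) v = B (p i) u := by simpa using hv i.succ
    have huv : B u v = 1 := by simpa using hv 0
    refine ⟨v, huv, ?_, hpv⟩
    -- `w = u + z` with `z ∈ span p`, so `B w v = 1 + B z u` and `B z u = B w u = 0`
    rw [one_smul] at huw ⊢
    rw [hB.map_add_left, huv, hB.apply_eq_of_mem_span hpv hz, hB.comm,
      ← hB.apply_add_smul_self u z 1, one_smul, add_comm z, huw, add_zero]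
  · obtain ⟨v, hv⟩ := hB.exists_forall_apply_eq (linearIndependent_finCons.2 ⟨hu, hwu⟩)
      (Fin.cons 1 (Fin.cons 1 fun i => B (p i) u))
    exact ⟨v, by simpa using hv (Fin.succ 0), by simpa using hv 0,
      fun i => by simpa using hv i.succ.succ⟩

lemma exists_isometryEquiv_fixing (hB : IsSymplectic B) {k : ℕ} (p : Fin k → J) {u w : J}
    (hpair : ∀ i, B (p i) u = B (p i) w)
    (hu : LinearIndependent (ZMod 2) (Fin.cons u p : Fin (k + 1) → J))
    (hw : LinearIndependent (ZMod 2) (Fin.cons w p : Fin (k + 1) → J)) :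
    ∃ g : hB.toBilin.IsometryEquiv hB.toBilin, (∀ i, g (p i) = p i) ∧ g u = w := by
  have step (u w : J) (huw : B u w = 1) (hp : ∀ i, B (p i) u = B (p i) w) :
      ∃ g : hB.toBilin.IsometryEquiv hB.toBilin, (∀ i, g (p i) = p i) ∧ g u = w :=
    ⟨hB.transvection (u + w), fun i => hB.transvection_apply_of_apply_eq_zero <| by
        rw [hB.map_add_left, hB.comm u, hB.comm w, hp i, ZModModule.add_self],
      hB.transvection_add_apply_left huw⟩
  rcases (B u w).eq_zero_or_eq_one with huw | huw
  · obtain ⟨v, huv, hwv, hpv⟩ :=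
      hB.exists_intermediate hu (linearIndependent_finCons.1 hw).2 huw
    obtain ⟨g₁, hg₁p, hg₁u⟩ := step u v huv fun i => (hpv i).symm
    obtain ⟨g₂, hg₂p, hg₂v⟩ :=
      step v w (by rw [hB.comm, hwv]) fun i => (hpv i).trans (hpair i)
    exact ⟨g₁.trans g₂, fun i => (congrArg g₂ (hg₁p i)).trans (hg₂p i),
      (congrArg g₂ hg₁u).trans hg₂v⟩
  · exact step u w huw hpair

theorem exists_isometryEquiv_of_linearIndependent (hB : IsSymplectic B) :
    ∀ {n : ℕ} {x y : Fin n → J}, LinearIndependent (ZMod 2) x →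
      LinearIndependent (ZMod 2) y → (∀ i j, B (x i) (x j) = B (y i) (y j)) →
      ∃ g : hB.toBilin.IsometryEquiv hB.toBilin, ∀ i, g (x i) = y i
  | 0, _, _, _, _, _ => ⟨.refl _, fun i => i.elim0⟩
  | n + 1, x, y, hx, hy, hxy => by
    obtain ⟨g, hg⟩ := hB.exists_isometryEquiv_of_linearIndependent
      (linearIndependent_finSucc.1 hx).1 (linearIndependent_finSucc.1 hy).1
      fun i j => hxy i.succ j.succ
    have hgx : (Fin.cons (g (x 0)) (Fin.tail y) : Fin (n + 1) → J) = g ∘ x := by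
      rw [← Fin.cons_self_tail x, Fin.comp_cons, Fin.cons_zero]
      exact congrArg _ (funext fun i => (hg i).symm)
    obtain ⟨h, hh, hx0⟩ := hB.exists_isometryEquiv_fixing (Fin.tail y) (u := g (x 0)) (w := y 0)
      (fun i => by rw [← hg i, hB.isometryEquiv_apply_apply, hg i]; exact hxy _ _)
      (hgx ▸ hx.map' (g : J ≃ₗ[ZMod 2] J).toLinearMap (LinearEquiv.ker _))
      (by rwa [Fin.cons_self_tail])
    exact ⟨g.trans h, Fin.cases hx0 fun i => (congrArg h (hg i)).trans (hh i)⟩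

lemma exists_isometryEquiv_of_fin_three (hB : IsSymplectic B) {a b : Fin 3 → J}
    (ha0 : ∀ i, a i ≠ 0) (hb0 : ∀ i, b i ≠ 0)
    (ha : Function.Injective a) (hb : Function.Injective b)
    (hrank : Module.finrank (ZMod 2) (Submodule.span (ZMod 2) (Set.range a)) =
      Module.finrank (ZMod 2) (Submodule.span (ZMod 2) (Set.range b)))
    (hab : ∀ k l, B (a k) (a l) = B (b k) (b l)) :
    ∃ g : hB.toBilin.IsometryEquiv hB.toBilin, ∀ k, g (a k) = b k := by
  have hLI : LinearIndependent (ZMod 2) a ↔ LinearIndependent (ZMod 2) b := by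
    simp only [linearIndependent_iff_card_eq_finrank_span, Set.finrank, hrank]
  by_cases h : LinearIndependent (ZMod 2) a
  · exact hB.exists_isometryEquiv_of_linearIndependent h (hLI.1 h) hab
  · obtain ⟨g, hg⟩ := hB.exists_isometryEquiv_of_linearIndependent (x := ![a 0, a 1])
      (y := ![b 0, b 1])
      (ZModModule.linearIndependent_pair_of_ne (ha0 0) (ha0 1) (ha.ne (by decide)))
      (ZModModule.linearIndependent_pair_of_ne (hb0 0) (hb0 1) (hb.ne (by decide)))
      fun i j => by fin_cases i <;> fin_cases j <;> exact hab _ _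
    refine ⟨g, fun k => ?_⟩
    fin_cases k
    · exact hg 0
    · exact hg 1
    · show g (a 2) = b 2
      rw [ZModModule.eq_add_of_not_linearIndependent ha0 ha h,
        ZModModule.eq_add_of_not_linearIndependent hb0 hb (mt hLI.2 h), map_add]
      exact congrArg₂ (· + ·) (hg 0) (hg 1)

end IsSymplectic

section Arf

variable {J : Type*} [Finite J]

lemma arfInv_comp_equivLike {E : Type*} [EquivLike E J J] (q : J → ZMod 2) (e : E) :
    ArfInv (fun x => q (e x)) = ArfInv q := by
  have hcard := Nat.card_congr ((e : J ≃ J).subtypeEquiv (p := fun x => q (e x) = 0)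
    (q := fun y => q y = 0) fun _ => Iff.rfl)
  simp only [ArfInv, hcard]

lemma arfInv_add_one (q : J → ZMod 2) (h : ArfInv q = 0) : ArfInv (fun x => q x + 1) = 1 := by
  have hcompl : {x // q x + 1 = 0} ≃ {x // ¬ q x = 0} := Equiv.subtypeEquivRight fun x => by
    rcases (q x).eq_zero_or_eq_one with hx | hx <;> simp [hx]; decide
  have hsplit := Nat.card_congr ((Equiv.refl _).sumCongr hcompl |>.trans
    (Equiv.sumCompl fun x => q x = 0))
  rw [Nat.card_sum] at hsplit
  have hq : Nat.card J < 2 * Nat.card {x // q x = 0} := by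
    by_contra hc
    simp [ArfInv, hc] at h
  simp only [ArfInv]
  rw [if_neg (by omega)]

end Arf

namespace QuadSet

variable {J : Type*} [AddCommGroup J] {B : J → J → ZMod 2} {q r : J → ZMod 2}

lemma apply_add (hq : q ∈ QuadSet B) (x y : J) : q (x + y) = q x + q y + B x y := by
  rw [← hq x y, ← add_assoc, ZModModule.add_self, zero_add]

variable [Module (ZMod 2) J]

lemma comp_isometryEquiv (hB : IsSymplectic B) (hq : q ∈ QuadSet B)
    (g : hB.toBilin.IsometryEquiv hB.toBilin) : (fun x => q (g x)) ∈ QuadSet B := fun x y => by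
  show q (g x) + q (g y) + q (g (x + y)) = B x y
  rw [map_add, hq, hB.isometryEquiv_apply_apply]

lemma apply_transvection (hB : IsSymplectic B) (hq : q ∈ QuadSet B) {c : J} (hc : q c = 0)
    (x : J) : q (hB.transvection c x) = q x + B c x := by
  rw [hB.transvection_apply]
  rcases (B c x).eq_zero_or_eq_one with h | h
  · rw [h, zero_smul, add_zero, add_zero]
  · rw [h, one_smul, apply_add hq, hc, add_zero, hB.comm, h]

variable [Finite J]

lemma exists_eq_add_apply (hB : IsSymplectic B) (hr : r ∈ QuadSet B) (hq : q ∈ QuadSet B) :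
    ∃ c, ∀ x, r x = q x + B c x := by
  let f : J →+ ZMod 2 := AddMonoidHom.mk' (fun x => r x + q x) fun x y => by
    rw [apply_add hr, apply_add hq]
    grind
  obtain ⟨c, hc⟩ := hB.exists_eq_apply (f.toZModLinearMap 2)
  refine ⟨c, fun x => ?_⟩
  rw [hc]
  show r x = q x + (r x + q x)
  grind

lemma apply_eq_zero_of_arfInv_eq_zero (hB : IsSymplectic B) (hq : q ∈ QuadSet B) {c : J}
    (h : ArfInv q = 0) (hc : ArfInv (fun x => q x + B c x) = 0) : q c = 0 := by
  by_contra hqc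
  replace hqc : q c = 1 := (q c).eq_zero_or_eq_one.resolve_left hqc
  have hshift : (fun x => q (x + c) + B c (x + c)) = fun x => q x + 1 := funext fun x => by
    rw [apply_add hq, hB.map_add_right, hB.apply_self, hqc, hB.comm x c]
    grind
  have := arfInv_comp_equivLike (fun x => q x + B c x) (Equiv.addRight c)
  simp only [Equiv.coe_addRight, hshift, hc, arfInv_add_one q h] at this
  exact one_ne_zero this

lemma exists_isometryEquiv_comp_eq (hB : IsSymplectic B) (hr : r ∈ QuadSet B)
    (hq : q ∈ QuadSet B) (hr0 : ArfInv r = 0) (hq0 : ArfInv q = 0) {ι : Type*} (b : ι → J)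
    (hrb : ∀ i, ArfInv (fun x => r x + B (b i) x) = 0)
    (hqb : ∀ i, ArfInv (fun x => q x + B (b i) x) = 0) :
    ∃ T : hB.toBilin.IsometryEquiv hB.toBilin,
      (∀ i, T (b i) = b i) ∧ ∀ x, r (T x) = q x := by
  obtain ⟨c, hc⟩ := exists_eq_add_apply hB hr hq
  have hqc : q c = 0 := apply_eq_zero_of_arfInv_eq_zero hB hq hq0 <| by
    rwa [← funext hc]
  have hcb (i : ι) : B c (b i) = 0 := by
    have := hc (b i)
    rwa [apply_eq_zero_of_arfInv_eq_zero hB hr hr0 (hrb i),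
      apply_eq_zero_of_arfInv_eq_zero hB hq hq0 (hqb i), zero_add, eq_comm] at this
  refine ⟨hB.transvection c, fun i => hB.transvection_apply_of_apply_eq_zero (hcb i),
    fun x => ?_⟩
  rw [hc, apply_transvection hB hq hqc, hB.transvection_apply, hB.apply_add_smul_self, add_assoc,
    ZModModule.add_self, add_zero]

end QuadSet

theorem stmt_11_general {J : Type*} [AddCommGroup J] [Module (ZMod 2) J] [Finite J]
    (B : J → J → ZMod 2) (hB : IsSymplectic B)
    (q q' : J → ZMod 2) (hq : q ∈ QuadSet B) (hq' : q' ∈ QuadSet B)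
    (a a' : Fin 3 → J)
    (ha0 : ∀ i, a i ≠ 0) (ha0' : ∀ i, a' i ≠ 0)
    (hainj : Function.Injective a) (hainj' : Function.Injective a')
    (hArf : ArfInv q = 0) (hArf' : ArfInv q' = 0)
    (hArfa : ∀ i, ArfInv (fun x => q x + B (a i) x) = 0)
    (hArfa' : ∀ i, ArfInv (fun x => q' x + B (a' i) x) = 0)
    (hdimspan : Module.finrank (ZMod 2) (Submodule.span (ZMod 2) (Set.range a)) =
      Module.finrank (ZMod 2) (Submodule.span (ZMod 2) (Set.range a')))
    (σ : Equiv.Perm (Fin 3))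
    (hσ : ∀ k l, B (a k) (a l) = B (a' (σ k)) (a' (σ l))) :
    ∃ M : J ≃ₗ[ZMod 2] J, (∀ x y, B (M x) (M y) = B x y) ∧
      ({fun x => q (M.symm x), fun x => q (M.symm x) + B (a 0) (M.symm x),
        fun x => q (M.symm x) + B (a 1) (M.symm x),
        fun x => q (M.symm x) + B (a 2) (M.symm x)} : Set (J → ZMod 2)) =
      ({q', fun x => q' x + B (a' 0) x, fun x => q' x + B (a' 1) x,
        fun x => q' x + B (a' 2) x} : Set (J → ZMod 2)) := by
  obtain ⟨g, hg⟩ := hB.exists_isometryEquiv_of_fin_three (b := fun k => a' (σ k)) ha0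
    (fun k => ha0' _) hainj (hainj'.comp σ.injective)
    (by rwa [← EquivLike.range_comp a' σ] at hdimspan) hσ
  have hgB (k : Fin 3) (x : J) : B (a' (σ k)) x = B (a k) (g.symm x) := by
    rw [← hg k, hB.isometryEquiv_apply_eq_apply_symm]
  have hrb (k : Fin 3) : ArfInv (fun x => q (g.symm x) + B (a' (σ k)) x) = 0 := by
    simpa only [hgB] using (arfInv_comp_equivLike _ g.symm).trans (hArfa k)
  obtain ⟨T, hTb, hT⟩ := QuadSet.exists_isometryEquiv_comp_eq hB
    (QuadSet.comp_isometryEquiv hB hq g.symm) hq' ((arfInv_comp_equivLike q g.symm).trans hArf)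
    hArf' _ hrb fun k => hArfa' (σ k)
  let M : J ≃ₗ[ZMod 2] J := g.trans T.symm
  have hqM : (fun x => q (M.symm x)) = q' := funext hT
  have haM (k : Fin 3) :
      (fun x => q (M.symm x) + B (a k) (M.symm x)) = fun x => q' x + B (a' (σ k)) x :=
    funext fun x => by
      show q (g.symm (T x)) + B (a k) (g.symm (T x)) = _
      rw [hT, ← hgB, ← hB.isometryEquiv_apply_apply T _ x, hTb]
  refine ⟨M, fun x y => (g.trans T.symm).map_app y x, ?_⟩
  rw [hqM, haM, haM, haM]
  exact Set.insert_comp_perm_fin_three q' (fun j x => q' x + B (a' j) x) σ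

/-- In a 12-dimensional symplectic `𝔽₂`-space, two sets
`{q, q+a₁, q+a₂, q+a₃}` and `{q', q'+a₁', q'+a₂', q'+a₃'}` of four distinct even quadratic
refinements with equal span dimensions and, after a permutation, equal pairings
`aₖ·aₗ = a'_{σk}·a'_{σl}`, lie in the same orbit of the symplectic group acting on
quadratic forms by `q ↦ q ∘ M⁻¹`. -/
theorem stmt_11 {J : Type*} [AddCommGroup J] [Module (ZMod 2) J] [Finite J]
    (B : J → J → ZMod 2) (hB : IsSymplectic B)
    (hdim : Module.finrank (ZMod 2) J = 12)
    (q q' : J → ZMod 2) (hq : q ∈ QuadSet B) (hq' : q' ∈ QuadSet B)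
    (a a' : Fin 3 → J)
    (ha0 : ∀ i, a i ≠ 0) (ha0' : ∀ i, a' i ≠ 0)
    (hainj : Function.Injective a) (hainj' : Function.Injective a')
    (hArf : ArfInv q = 0) (hArf' : ArfInv q' = 0)
    (hArfa : ∀ i, ArfInv (fun x => q x + B (a i) x) = 0)
    (hArfa' : ∀ i, ArfInv (fun x => q' x + B (a' i) x) = 0)
    (hdimspan : Module.finrank (ZMod 2) (Submodule.span (ZMod 2) (Set.range a)) =
      Module.finrank (ZMod 2) (Submodule.span (ZMod 2) (Set.range a')))
    (σ : Equiv.Perm (Fin 3))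
    (hσ : ∀ k l, B (a k) (a l) = B (a' (σ k)) (a' (σ l))) :
    ∃ M : J ≃ₗ[ZMod 2] J, (∀ x y, B (M x) (M y) = B x y) ∧
      ({fun x => q (M.symm x), fun x => q (M.symm x) + B (a 0) (M.symm x),
        fun x => q (M.symm x) + B (a 1) (M.symm x),
        fun x => q (M.symm x) + B (a 2) (M.symm x)} : Set (J → ZMod 2)) =
      ({q', fun x => q' x + B (a' 0) x, fun x => q' x + B (a' 1) x,
        fun x => q' x + B (a' 2) x} : Set (J → ZMod 2)) :=
  stmt_11_general B hB q q' hq hq' a a' ha0 ha0' hainj hainj' hArf hArf' hArfa hArfa' hdimspan σ hσ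
end

section
/- Let J be a 12-dimensional symplectic F_2-vector space and q ∈ Quad(J) with Arf(q) = 0. Suppose a_1, a_2, a_3 ∈ J satisfy a_1·a_2 = 1, a_1·a_3 = 0, a_2·a_3 = 0 and q(a_i) = 0 for i = 1,2,3, with a_1,a_2,a_3 linearly independent. Then there exist a_2'', a_3'' ∈ J with q(a_2'') = q(a_3'') = 0, a_2·a_2'' = 1, a_2·a_3'' = 1, a_2''·a_3'' = 0, and a_2, a_2'', a_3'' linearly independent. -/
/-- In a 12-dimensional symplectic `𝔽₂`-space with even quadratic
refinement `q`, given linearly independent `a₁, a₂, a₃` with `q(aᵢ) = 0`, `a₁·a₂ = 1`,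
`a₁·a₃ = 0`, `a₂·a₃ = 0`, there exist `a₂'', a₃''` with `q(a₂'') = q(a₃'') = 0`,
`a₂·a₂'' = 1`, `a₂·a₃'' = 1`, `a₂''·a₃'' = 0` and `a₂, a₂'', a₃''` linearly independent. -/
theorem stmt_14 {J : Type*} [AddCommGroup J] [Module (ZMod 2) J] [Finite J]
    (B : J → J → ZMod 2) (hB : IsSymplectic B)
    (hdim : Module.finrank (ZMod 2) J = 12)
    (q : J → ZMod 2) (hq : q ∈ QuadSet B) (hArf : ArfInv q = 0)
    (a₁ a₂ a₃ : J)
    (h12 : B a₁ a₂ = 1) (h13 : B a₁ a₃ = 0) (h23 : B a₂ a₃ = 0)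
    (hq1 : q a₁ = 0) (hq2 : q a₂ = 0) (hq3 : q a₃ = 0)
    (hind : LinearIndependent (ZMod 2) ![a₁, a₂, a₃]) :
    ∃ a₂'' a₃'' : J, q a₂'' = 0 ∧ q a₃'' = 0 ∧ B a₂ a₂'' = 1 ∧ B a₂ a₃'' = 1 ∧
      B a₂'' a₃'' = 0 ∧ LinearIndependent (ZMod 2) ![a₂, a₂'', a₃''] := by
  obtain ⟨hadd, hbdd, halt, -⟩ := hB
  have key : ∀ a b : ZMod 2, a + b = 0 → a = b := by decide
  have hsym : ∀ x y, B x y = B y x := by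
    intro x y
    apply key
    have h := halt (x + y)
    rw [hadd, hbdd, hbdd, halt x, halt y] at h
    linear_combination h
  have hqadd : ∀ x y, q (x + y) = q x + q y + B x y := by
    intro x y
    have h := hq x y
    have key2 : ∀ a b c d : ZMod 2, a + b + c = d → c = a + b + d := by decide
    exact key2 _ _ _ _ h
  refine ⟨a₁, a₁ + a₃, hq1, ?_, ?_, ?_, ?_, ?_⟩
  · rw [hqadd, hq1, hq3, h13]; ring
  · rw [← hsym, h12]
  · rw [hbdd, ← hsym a₁ a₂, h12, h23]; ring
  · rw [hbdd, halt, h13]; ring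
  · rw [Fintype.linearIndependent_iff] at hind ⊢
    intro g hg
    simp only [Fin.sum_univ_three, Matrix.cons_val_zero, Matrix.cons_val_one,
      Matrix.head_cons, Matrix.cons_val_two, Matrix.tail_cons] at hg ⊢
    have h0 : (g 1 + g 2) • a₁ + g 0 • a₂ + g 2 • a₃ = 0 := by
      rw [← hg]; module
    have := hind ![g 1 + g 2, g 0, g 2] (by
      simp only [Fin.sum_univ_three, Matrix.cons_val_zero, Matrix.cons_val_one,
        Matrix.head_cons, Matrix.cons_val_two, Matrix.tail_cons]
      exact h0)
    have e0 := this 0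
    have e1 := this 1
    have e2 := this 2
    simp only [Matrix.cons_val_zero, Matrix.cons_val_one, Matrix.head_cons,
      Matrix.cons_val_two, Matrix.tail_cons] at e0 e1 e2
    intro i
    fin_cases i
    · exact e1
    · simpa [e2] using e0
    · exact e2
end

section
/- Let J be a finite symplectic F_2-vector space and (S, Q) a symplectic torsor over J. The map t ↦ q_t, where q_t(j) = Q(t) + Q(j+t), is a J-equivariant bijection from S to Quad(J): it satisfies q_{j+t} = j + q_t (i.e. q_{j+t}(x) = q_t(x) + j·x) for all j ∈ J, t ∈ S, and it is injective, hence bijective since |S| = |J| = |Quad(J)|. -/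
/-! The difference of two quadratic refinements of `B` is additive, and by non-degeneracy every
additive functional on the finite space `J` is `B j` for a unique `j`. Hence fixing `t₀ : S`,
the refinements `q_{j+t₀} = q_{t₀} + B j` exhaust `Quad(J)`, and distinct `j` give distinct ones. -/

theorem QuadSet.sub_map_add {J : Type*} [AddCommGroup J] {B : J → J → ZMod 2}
    {p q : J → ZMod 2} (hp : p ∈ QuadSet B) (hq : q ∈ QuadSet B) (x y : J) :
    (p - q) (x + y) = (p - q) x + (p - q) y := by
  have := hp x y
  have := hq x y
  simp only [Pi.sub_apply]
  grind

theorem exists_apply_eq_of_nondegenerate {J : Type*} [AddCommGroup J] [Module (ZMod 2) J]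
    [Finite J] {B : J → J → ZMod 2}
    (hl : ∀ x y z, B (x + y) z = B x z + B y z) (hr : ∀ x y z, B x (y + z) = B x y + B x z)
    (hnd : ∀ x, (∀ y, B x y = 0) → x = 0) (f : J →+ ZMod 2) :
    ∃ j, B j = f := by
  let φ : J →ₗ[ZMod 2] Module.Dual (ZMod 2) J :=
    (AddMonoidHom.mk' (fun j => (AddMonoidHom.mk' (B j) (hr j)).toZModLinearMap 2)
      fun j k => LinearMap.ext (hl j k)).toZModLinearMap 2
  have hφ : Function.Injective φ := by
    rw [← LinearMap.ker_eq_bot, LinearMap.ker_eq_bot']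
    exact fun j hj => hnd j (LinearMap.congr_fun hj)
  obtain ⟨j, hj⟩ := (LinearMap.injective_iff_surjective_of_finrank_eq_finrank
    Subspace.dual_finrank_eq.symm).mp hφ (f.toZModLinearMap 2)
  exact ⟨j, funext (LinearMap.congr_fun hj)⟩

section SymplecticTorsor

variable {J S : Type*} [AddCommGroup J] (act : J → S → S) (Q : S → ZMod 2)

def refinementAt (t : S) : J → ZMod 2 := fun j => Q t + Q (act j t)

variable {act Q} {B : J → J → ZMod 2}

theorem refinementAt_mem_quadSet
    (hQ : ∀ s j₁ j₂, Q s + Q (act j₁ s) + Q (act j₂ s) + Q (act (j₁ + j₂) s) = B j₁ j₂)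
    (t : S) : refinementAt act Q t ∈ QuadSet B := by
  intro x y
  have := hQ t x y
  simp only [refinementAt]
  grind

theorem refinementAt_act (hactadd : ∀ j k s, act (j + k) s = act j (act k s))
    (hQ : ∀ s j₁ j₂, Q s + Q (act j₁ s) + Q (act j₂ s) + Q (act (j₁ + j₂) s) = B j₁ j₂)
    (j : J) (t : S) (x : J) :
    refinementAt act Q (act j t) x = refinementAt act Q t x + B j x := by
  have := hQ t j x
  rw [add_comm j, hactadd] at this
  simp only [refinementAt]
  grind

theorem refinementAt_injective (hact0 : ∀ s, act 0 s = s)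
    (hactadd : ∀ j k s, act (j + k) s = act j (act k s))
    (htrans : ∀ s t : S, ∃! j : J, act j s = t)
    (hQ : ∀ s j₁ j₂, Q s + Q (act j₁ s) + Q (act j₂ s) + Q (act (j₁ + j₂) s) = B j₁ j₂)
    (hnd : ∀ x, (∀ y, B x y = 0) → x = 0) :
    Function.Injective (refinementAt act Q) := by
  intro t t' h
  obtain ⟨j, rfl, -⟩ := htrans t t'
  have hj : j = 0 := hnd j fun x => by
    simpa using (congrFun h x).trans (refinementAt_act hactadd hQ j t x)
  rw [hj, hact0]

end SymplecticTorsor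

/-- Let `(S, Q)` be a symplectic torsor over a finite symplectic
`𝔽₂`-vector space `(J, B)`. The map `t ↦ q_t`, where `q_t(j) = Q(t) + Q(j + t)`, is a
`J`-equivariant bijection from `S` to the set of quadratic refinements of `B`:
it satisfies `q_{j+t} = j + q_t`, is injective, and is surjective onto `Quad(J)`. -/
theorem stmt_19 {J S : Type*} [AddCommGroup J] [Module (ZMod 2) J] [Finite J]
    [Nonempty S]
    (B : J → J → ZMod 2) (hB : IsSymplectic B)
    (act : J → S → S)
    (hact0 : ∀ s, act 0 s = s)
    (hactadd : ∀ j k s, act (j + k) s = act j (act k s))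
    (htrans : ∀ s t : S, ∃! j : J, act j s = t)
    (Q : S → ZMod 2)
    (hQ : ∀ (s : S) (j₁ j₂ : J),
      Q s + Q (act j₁ s) + Q (act j₂ s) + Q (act (j₁ + j₂) s) = B j₁ j₂) :
    (∀ t : S, (fun j => Q t + Q (act j t)) ∈ QuadSet B) ∧
    (∀ (j : J) (t : S) (x : J),
      Q (act j t) + Q (act x (act j t)) = (Q t + Q (act x t)) + B j x) ∧
    Function.Injective (fun t : S => fun j => Q t + Q (act j t)) ∧
    (∀ p ∈ QuadSet B, ∃ t : S, (fun j => Q t + Q (act j t)) = p) := by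
  obtain ⟨hl, hr, -, hnd⟩ := hB
  refine ⟨refinementAt_mem_quadSet hQ, refinementAt_act hactadd hQ,
    refinementAt_injective hact0 hactadd htrans hQ hnd, fun p hp => ?_⟩
  obtain ⟨t₀⟩ := ‹Nonempty S›
  obtain ⟨j, hj⟩ := exists_apply_eq_of_nondegenerate hl hr hnd
    (AddMonoidHom.mk' _ (QuadSet.sub_map_add hp (refinementAt_mem_quadSet hQ t₀)))
  refine ⟨act j t₀, funext fun x => ?_⟩
  have hjx : B j x = p x - refinementAt act Q t₀ x := congrFun hj x
  rw [← refinementAt, refinementAt_act hactadd hQ, hjx]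
  ring
end
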